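/- arXiv:2605.18687 — 2 statements merged into one kernel-verified Lean document; each statement's English description precedes it below -/
import Mathlib

section
/- Let T(q) = t₀·(1 + a·(q/c)^β) be the BPR travel-time function with t₀ > 0, a > 0, c > 0, and β ≥ 1 a natural number. Then the function g(v) = v·T(b + v) is convex on [0, ∞) for any fixed b ≥ 0. -/
open Set

/-- Both factors are nonnegative, convex and increasing on `[0, ∞)`, so their product is convex. -/
theorem convexOn_mul_add_pow {𝕜 : Type*} [Field 𝕜] [LinearOrder 𝕜] [IsStrictOrderedRing 𝕜]
    {b : 𝕜} (hb : 0 ≤ b) (n : ℕ) : ConvexOn 𝕜 (Ici 0) fun x => x * (b + x) ^ n := by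
  have hshift_nonneg : ∀ ⦃x : 𝕜⦄, x ∈ Ici 0 → 0 ≤ b + x := fun _ hx => add_nonneg hb hx
  have hshift : ConvexOn 𝕜 (Ici 0) fun x : 𝕜 => b + x :=
    (convexOn_const b (convex_Ici 0)).add (convexOn_id (convex_Ici 0))
  have hmonovary : MonovaryOn id (fun x : 𝕜 => (b + x) ^ n) (Ici 0) :=
    MonotoneOn.monovaryOn (fun _ _ _ _ hxy => hxy) fun _ hx _ _ hxy =>
      pow_le_pow_left₀ (hshift_nonneg hx) (add_le_add_right hxy b) n
  exact (convexOn_id (convex_Ici 0)).mul (hshift.pow hshift_nonneg n) (fun _ hx => hx)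
    (fun _ hx => pow_nonneg (hshift_nonneg hx) n) hmonovary

theorem stmt_2_general (t₀ a c b : ℝ) (ht₀ : 0 < t₀) (ha : 0 < a) (hc : 0 < c)
    (hb : 0 ≤ b) (β : ℕ) :
    ConvexOn ℝ (Set.Ici (0:ℝ))
      (fun v => v * (t₀ * (1 + a * ((b + v) / c) ^ β))) := by
  have hexpand : (fun v : ℝ => v * (t₀ * (1 + a * ((b + v) / c) ^ β)))
      = fun v => t₀ • id v + (t₀ * a / c ^ β) • (v * (b + v) ^ β) := by
    funext v
    simp only [id, smul_eq_mul, div_pow]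
    field_simp
  rw [hexpand]
  exact ((convexOn_id (convex_Ici 0)).smul ht₀.le).add
    ((convexOn_mul_add_pow hb β).smul (by positivity))

theorem stmt_2 (t₀ a c b : ℝ) (ht₀ : 0 < t₀) (ha : 0 < a) (hc : 0 < c)
    (hb : 0 ≤ b) (β : ℕ) (hβ : 1 ≤ β) :
    ConvexOn ℝ (Set.Ici (0:ℝ))
      (fun v => v * (t₀ * (1 + a * ((b + v) / c) ^ β))) :=
  stmt_2_general t₀ a c b ht₀ ha hc hb β
end

section
/- (Lower bound on implementation payments.) Let G be a two-player game with finite strategy sets and utilities U₁, U₂, and let z be a target profile. If V₁, V₂: X₁ × X₂ → ℝ≥0 are transfers such that z is a Nash equilibrium of the game with utilities U₁ + V₁ and U₂ + V₂, then V₁(z) + V₂(z) ≥ Σ_{i∈{1,2}} (max_{xᵢ ∈ Xᵢ} Uᵢ(xᵢ, z₋ᵢ) − Uᵢ(zᵢ, z₋ᵢ)). -/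
open Finset

theorem stmt_7 {X₁ X₂ : Type*} [Fintype X₁] [Fintype X₂] [Nonempty X₁] [Nonempty X₂]
    (U₁ U₂ : X₁ → X₂ → ℝ) (z₁ : X₁) (z₂ : X₂)
    (V₁ V₂ : X₁ → X₂ → ℝ)
    (hV₁nonneg : ∀ x₁ x₂, 0 ≤ V₁ x₁ x₂) (hV₂nonneg : ∀ x₁ x₂, 0 ≤ V₂ x₁ x₂)
    (hNE₁ : ∀ x₁ : X₁, U₁ x₁ z₂ + V₁ x₁ z₂ ≤ U₁ z₁ z₂ + V₁ z₁ z₂)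
    (hNE₂ : ∀ x₂ : X₂, U₂ z₁ x₂ + V₂ z₁ x₂ ≤ U₂ z₁ z₂ + V₂ z₁ z₂) :
    V₁ z₁ z₂ + V₂ z₁ z₂ ≥
      ((Finset.univ.sup' Finset.univ_nonempty (fun x₁ => U₁ x₁ z₂)) - U₁ z₁ z₂) +
      ((Finset.univ.sup' Finset.univ_nonempty (fun x₂ => U₂ z₁ x₂)) - U₂ z₁ z₂) := by
  have h1 : (Finset.univ.sup' Finset.univ_nonempty (fun x₁ => U₁ x₁ z₂)) - U₁ z₁ z₂ ≤ V₁ z₁ z₂ := by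
    rw [sub_le_iff_le_add]
    apply Finset.sup'_le
    intro x _
    have := hNE₁ x
    have := hV₁nonneg x z₂
    linarith
  have h2 : (Finset.univ.sup' Finset.univ_nonempty (fun x₂ => U₂ z₁ x₂)) - U₂ z₁ z₂ ≤ V₂ z₁ z₂ := by
    rw [sub_le_iff_le_add]
    apply Finset.sup'_le
    intro x _
    have := hNE₂ x
    have := hV₂nonneg z₁ x
    linarith
  linarith
end
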